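/- Assume t_N, t_NoN > 0, κ_u > 0, κ_ad > 0, 0 < q̃_f < q̃_p, and let p̃, Δp be real. (1) If (q_N*, q_NoN*, z*) maximizes Π over the feasible set 𝓕 and x_N(q_N*, q_NoN*) ≥ 1, then q_N* = q̃_f. (2) If Δp ≥ t_N − κ_u·q̃_f, then for every q_NoN with 0 ≤ q_NoN ≤ q̃_f and q_NoN ≤ (κ_u·q̃_f − t_N + Δp)/κ_u, the point (q̃_f, q_NoN) satisfies x_N(q̃_f, q_NoN) ≥ 1 and Π(q̃_f, q_NoN, 0) ≥ Π(q_N', q_NoN', 0) for every feasible triple (q_N', q_NoN', 0) ∈ 𝓕 with x_N(q_N', q_NoN') ≥ 1. -/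
import Mathlib


/-- Indifference location of end-users given qualities on each ISP. -/
noncomputable def xN (tN tNoN κu Δp qN qNoN : ℝ) : ℝ :=
  (tNoN + κu * (qN - qNoN) + Δp) / (tN + tNoN)

/-- Fraction of end-users joining the neutral ISP. -/
noncomputable def nN (tN tNoN κu Δp qN qNoN : ℝ) : ℝ :=
  min 1 (max 0 (xN tN tNoN κu Δp qN qNoN))

/-- CP payoff: `n_N κ_ad q_N + n_NoN κ_ad q_NoN − z p̃ q_NoN` with `n_NoN = 1 − n_N`. -/
noncomputable def Pi (tN tNoN κu Δp κad ptilde qN qNoN z : ℝ) : ℝ :=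
  nN tN tNoN κu Δp qN qNoN * κad * qN
    + (1 - nN tN tNoN κu Δp qN qNoN) * κad * qNoN - z * ptilde * qNoN

/-- The CP's feasible set `𝓕`: `0 ≤ q_N ≤ q̃_f` and either `z = 0` with
`0 ≤ q_NoN ≤ q̃_f`, or `z = 1` with `q̃_f < q_NoN ≤ q̃_p`. -/
def Feas (qf qp qN qNoN z : ℝ) : Prop :=
  0 ≤ qN ∧ qN ≤ qf ∧
    ((z = 0 ∧ 0 ≤ qNoN ∧ qNoN ≤ qf) ∨ (z = 1 ∧ qf < qNoN ∧ qNoN ≤ qp))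

lemma nN_eq_one {tN tNoN κu Δp qN qNoN : ℝ} (h : xN tN tNoN κu Δp qN qNoN ≥ 1) :
    nN tN tNoN κu Δp qN qNoN = 1 := by
  unfold nN
  have h0 : (0:ℝ) ≤ xN tN tNoN κu Δp qN qNoN := le_trans zero_le_one h
  rw [max_eq_right h0, min_eq_left h]

lemma Pi_of_xN_ge_one {tN tNoN κu Δp κad ptilde qN qNoN z : ℝ}
    (h : xN tN tNoN κu Δp qN qNoN ≥ 1) :
    Pi tN tNoN κu Δp κad ptilde qN qNoN z = κad * qN - z * ptilde * qNoN := by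
  unfold Pi
  rw [nN_eq_one h]; ring

/-- Lemma on `F^U`: (1) at a maximizer with `x_N ≥ 1`, the neutral
quality equals `q̃_f`; (2) if `Δp ≥ t_N − κ_u q̃_f`, every `(q̃_f, q_NoN)` with
`0 ≤ q_NoN ≤ q̃_f` and `q_NoN ≤ (κ_u q̃_f − t_N + Δp)/κ_u` lies in `F^U` and is
optimal among `z = 0` feasible strategies with `x_N ≥ 1`. -/
theorem CP_upper_region_optima
    (tN tNoN κu κad qf qp ptilde Δp : ℝ)
    (htN : 0 < tN) (htNoN : 0 < tNoN) (hκu : 0 < κu) (hκad : 0 < κad)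
    (hqf : 0 < qf) (hq : qf < qp) :
    (∀ qNs qNoNs zs : ℝ, Feas qf qp qNs qNoNs zs →
      (∀ qN qNoN z : ℝ, Feas qf qp qN qNoN z →
        Pi tN tNoN κu Δp κad ptilde qN qNoN z ≤
          Pi tN tNoN κu Δp κad ptilde qNs qNoNs zs) →
      xN tN tNoN κu Δp qNs qNoNs ≥ 1 → qNs = qf) ∧
    (Δp ≥ tN - κu * qf →
      ∀ qNoN : ℝ, 0 ≤ qNoN → qNoN ≤ qf → qNoN ≤ (κu * qf - tN + Δp) / κu →
        xN tN tNoN κu Δp qf qNoN ≥ 1 ∧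
        ∀ qN' qNoN' : ℝ, Feas qf qp qN' qNoN' 0 →
          xN tN tNoN κu Δp qN' qNoN' ≥ 1 →
          Pi tN tNoN κu Δp κad ptilde qN' qNoN' 0 ≤
            Pi tN tNoN κu Δp κad ptilde qf qNoN 0) := by
  have hden : 0 < tN + tNoN := by linarith
  constructor
  · intro qNs qNoNs zs hfeas hopt hx
    obtain ⟨h0, h1, h2⟩ := hfeas
    have hfeas' : Feas qf qp qf qNoNs zs := ⟨le_of_lt hqf, le_refl qf, h2⟩
    have hx' : xN tN tNoN κu Δp qf qNoNs ≥ 1 := by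
      have : xN tN tNoN κu Δp qNs qNoNs ≤ xN tN tNoN κu Δp qf qNoNs := by
        unfold xN
        apply div_le_div_of_nonneg_right (by nlinarith) hden.le
      linarith
    have := hopt qf qNoNs zs hfeas'
    rw [Pi_of_xN_ge_one hx, Pi_of_xN_ge_one hx'] at this
    nlinarith
  · intro hΔp qNoN h0 h1 h2
    have hx : xN tN tNoN κu Δp qf qNoN ≥ 1 := by
      have : κu * qNoN ≤ κu * qf - tN + Δp := by
        have := (le_div_iff₀ hκu).mp h2
        linarith [mul_comm κu qNoN]
      unfold xN
      rw [ge_iff_le, le_div_iff₀ hden]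
      nlinarith
    refine ⟨hx, fun qN' qNoN' hfeas hx' => ?_⟩
    obtain ⟨h0', h1', h2'⟩ := hfeas
    rw [Pi_of_xN_ge_one hx, Pi_of_xN_ge_one hx']
    nlinarith
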